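/- A non-trivial free product G = A * B with A non-trivial finite or infinite and B infinite cyclic is icc provided |A| ≥ 2: every conjugacy class of a non-identity element of A * B is infinite. -/

import Mathlib

/-!
The factor `B` is malnormal in `A ∗ B`: if `g β g⁻¹ ∈ B` for some `β ∈ B \ {1}`, then `g ∈ B`,
because otherwise the reduced words give the conjugate length at least three. If the conjugacy
class of `g ≠ 1` were finite, every element would have a nonzero power centralising `g`.
Applied to `b`, this puts `g` in `B` by malnormality; applied to `a b a⁻¹` with `1 ≠ a ∈ A`, it
puts `a⁻¹ g a` in `B`, and malnormality once more gives `a ∈ B`, which is absurd.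
-/

open Monoid

namespace Subgroup

variable {G : Type*} [Group G]

def IsMalnormal (H : Subgroup G) : Prop :=
  ∀ g : G, ∀ h ∈ H, h ≠ 1 → g * h * g⁻¹ ∈ H → g ∈ H

theorem IsMalnormal.mem_of_commute {H : Subgroup G} (hH : H.IsMalnormal) {g h : G} (hh : h ∈ H)
    (h1 : h ≠ 1) (hgh : Commute g h) : g ∈ H :=
  hH g h hh h1 (by rwa [hgh.eq, mul_inv_cancel_right])

theorem IsMalnormal.comap {G' : Type*} [Group G'] {H : Subgroup G'} (hH : H.IsMalnormal)
    {f : G →* G'} (hf : Function.Injective f) : (H.comap f).IsMalnormal := by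
  intro g h hh h1 hconj
  refine hH (f g) (f h) hh (fun hf1 => h1 (hf (by rw [hf1, map_one]))) ?_
  simpa using hconj

end Subgroup

theorem exists_zpow_commute_of_finite_conjugatesOf {G : Type*} [Group G] {g : G}
    (hfin : (conjugatesOf g).Finite) (u : G) : ∃ k : ℤ, k ≠ 0 ∧ Commute (u ^ k) g := by
  have := hfin.to_subtype
  obtain ⟨k, m, hkm, hconj⟩ := Finite.exists_ne_map_eq_of_infinite
    fun k : ℤ => (⟨u ^ k * g * (u ^ k)⁻¹, isConj_iff.2 ⟨_, rfl⟩⟩ : conjugatesOf g)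
  refine ⟨-m + k, by omega, ?_⟩
  have hconj : u ^ k * g * (u ^ k)⁻¹ = u ^ m * g * (u ^ m)⁻¹ := congrArg Subtype.val hconj
  calc u ^ (-m + k) * g = (u ^ m)⁻¹ * (u ^ k * g * (u ^ k)⁻¹) * u ^ k := by group
    _ = (u ^ m)⁻¹ * (u ^ m * g * (u ^ m)⁻¹) * u ^ k := by rw [hconj]
    _ = g * u ^ (-m + k) := by group

theorem Subgroup.IsMalnormal.infinite_conjugatesOf {G : Type*} [Group G] {H : Subgroup G}
    (hH : H.IsMalnormal) {a b : G} (ha : a ∉ H) (hbH : b ∈ H) (hb : orderOf b = 0) {g : G}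
    (hg : g ≠ 1) : (conjugatesOf g).Infinite := by
  intro hfin
  have hpow : ∀ k : ℤ, k ≠ 0 → b ^ k ≠ 1 := fun k hk hbk =>
    hk (by simpa [hb] using orderOf_dvd_iff_zpow_eq_one.2 hbk)
  obtain ⟨k, hk, hbg⟩ := exists_zpow_commute_of_finite_conjugatesOf hfin b
  have hgH : g ∈ H := hH.mem_of_commute (H.zpow_mem hbH k) (hpow k hk) hbg.symm
  obtain ⟨m, hm, habg⟩ := exists_zpow_commute_of_finite_conjugatesOf hfin (a * b * a⁻¹)
  rw [conj_zpow] at habg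
  have hconjH : a⁻¹ * g * a ∈ H := hH.mem_of_commute (H.zpow_mem hbH m) (hpow m hm) <| by
    simpa [mul_assoc] using ((Commute.conj_iff a⁻¹).2 habg).symm
  exact ha (inv_mem_iff.1 (hH a⁻¹ g hgH hg (by rwa [inv_inv])))

namespace Monoid.CoprodI

variable {ι : Type*} {G : ι → Type*} [∀ i, Group (G i)]

theorem Word.prod_injective : Function.Injective (Word.prod : Word G → CoprodI G) := by
  classical exact Word.equiv.symm.injective

theorem Word.length_toList_le_one_of_prod_eq_of {i : ι} {w : Word G} {m : G i}
    (h : w.prod = of m) : w.toList.length ≤ 1 := by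
  by_cases hm : m = 1
  · have : w = Word.empty := Word.prod_injective (by rw [h, hm, map_one]; rfl)
    simp [this, Word.empty]
  · have : w = (NeWord.singleton m hm).toWord :=
      Word.prod_injective (h.trans (NeWord.prod_singleton m hm).symm)
    simp [this, NeWord.toWord]

theorem isMalnormal_range_of (i : ι) : (of : G i →* CoprodI G).range.IsMalnormal := by
  classical
  rintro g _ ⟨β, rfl⟩ hβ ⟨β', hβ'⟩
  -- `g⁻¹ = c * t` with `c ∈ G i` and `t` a reduced word not starting in `G i`; then
  -- `g β g⁻¹ = t⁻¹ (c⁻¹ β c) t` is reduced as written, of length at least three.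
  set p := Word.equivPair i (Word.equiv g⁻¹)
  have hg : g⁻¹ = of p.head * p.tail.prod := by
    rw [← Word.prod_rcons, ← Word.equivPair_symm, Equiv.symm_apply_apply]
    exact (Word.equiv.symm_apply_apply g⁻¹).symm
  by_cases ht : p.tail = Word.empty
  · exact ⟨p.head⁻¹, by rw [map_inv, ← inv_inv g, hg, ht, Word.prod_empty, mul_one]⟩
  exfalso
  obtain ⟨k, l, w, hw⟩ := NeWord.of_word p.tail ht
  have hk : k ≠ i := fun hki => p.fstIdx_ne (by subst hki; simp [← hw, Word.fstIdx, NeWord.toWord])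
  have hβ₀ : p.head⁻¹ * β * p.head ≠ 1 := by
    rw [Ne, mul_assoc, inv_mul_eq_one, right_eq_mul]
    simpa using (map_ne_one_iff _ (of_injective i)).1 hβ
  let W := (w.inv.append hk (NeWord.singleton _ hβ₀)).append hk.symm w
  have hW : W.toWord.prod = of β' := by
    have hg' : g = p.tail.prod⁻¹ * of p.head⁻¹ := by rw [← inv_inv g, hg, mul_inv_rev, map_inv]
    change W.prod = _
    simp only [W, NeWord.append_prod, NeWord.inv_prod, NeWord.prod_singleton, map_mul, map_inv]
    rw [NeWord.prod, hw, hβ', hg']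
    simp only [map_inv, mul_inv_rev, inv_inv, mul_assoc]
  have := Word.length_toList_le_one_of_prod_eq_of hW
  have h1 := List.length_pos_iff.2 w.toList_ne_nil
  have h2 := List.length_pos_iff.2 w.inv.toList_ne_nil
  simp only [W, NeWord.toWord, NeWord.toList, List.length_append, List.length_cons] at this
  omega

end Monoid.CoprodI

universe u v

namespace Monoid.Coprod

/-- `CoprodI` needs a family in a single universe, hence the `ULift`s. -/
def factors (A : Type u) (B : Type v) : Bool → Type (max u v)
  | true => ULift.{v} A
  | false => ULift.{u} B

variable {A : Type u} {B : Type v} [Group A] [Group B]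

instance : ∀ i, Group (factors A B i)
  | true => ULift.group
  | false => ULift.group

def toCoprodI : A ∗ B →* CoprodI (factors A B) :=
  lift ((CoprodI.of (i := true)).comp MulEquiv.ulift.symm.toMonoidHom)
    ((CoprodI.of (i := false)).comp MulEquiv.ulift.symm.toMonoidHom)

def ofCoprodI : CoprodI (factors A B) →* A ∗ B :=
  CoprodI.lift fun
    | true => inl.comp MulEquiv.ulift.toMonoidHom
    | false => inr.comp MulEquiv.ulift.toMonoidHom

theorem ofCoprodI_comp_toCoprodI : ofCoprodI.comp toCoprodI = MonoidHom.id (A ∗ B) := by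
  ext <;> rfl

theorem toCoprodI_injective : Function.Injective (toCoprodI : A ∗ B →* _) :=
  Function.LeftInverse.injective (g := ofCoprodI) (DFunLike.congr_fun ofCoprodI_comp_toCoprodI)

theorem range_inr_eq_comap_toCoprodI :
    (inr : B →* A ∗ B).range = (CoprodI.of (i := false)).range.comap toCoprodI := by
  ext g
  constructor
  · rintro ⟨β, rfl⟩
    exact ⟨ULift.up β, rfl⟩
  · rintro ⟨β, hβ⟩
    exact ⟨β.down, toCoprodI_injective (hβ ▸ rfl)⟩

theorem isMalnormal_range_inr : (inr : B →* A ∗ B).range.IsMalnormal := by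
  rw [range_inr_eq_comap_toCoprodI]
  exact (CoprodI.isMalnormal_range_of false).comap toCoprodI_injective

theorem inl_notMem_range_inr {a : A} (ha : a ≠ 1) : inl a ∉ (inr : B →* A ∗ B).range := by
  rintro ⟨β, hβ⟩
  exact ha (by simpa using (congrArg fst hβ).symm)

end Monoid.Coprod

/-- A free product `Monoid.Coprod A B` with `|A| ≥ 2` and `B` infinite cyclic is icc: every
conjugacy class of a non-identity element is infinite. -/
theorem stmt18 {A B : Type*} [Group A] [Nontrivial A] [Group B]
    (b : B) (hb : ∀ x : B, x ∈ Subgroup.zpowers b) (hBinf : Infinite B) :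
    ∀ g : Monoid.Coprod A B, g ≠ 1 → {h : Monoid.Coprod A B | ∃ x : Monoid.Coprod A B, x * g * x⁻¹ = h}.Infinite := by
  intro g hg
  obtain ⟨a, ha⟩ := exists_ne (1 : A)
  have hb_order : orderOf (Coprod.inr b : Monoid.Coprod A B) = 0 := by
    rw [orderOf_injective _ Coprod.inr_injective, Infinite.orderOf_eq_zero_of_forall_mem_zpowers hb]
  simpa only [conjugatesOf, isConj_iff] using Coprod.isMalnormal_range_inr.infinite_conjugatesOf
    (Coprod.inl_notMem_range_inr ha) ⟨b, rfl⟩ hb_order hg
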